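/- Let N ≥ 1, let K be a field and q ∈ K nonzero. For an arbitrary family of rational functions φ_{i,ε} ∈ F = K(x_1,…,x_N) (1 ≤ i ≤ N, ε ∈ {+1,−1}), define for each n ∈ ℤ the K-linear endomorphisms of F: D_{2n}(f) = q^{−n} f + Σ_{i,ε} φ_{i,ε} · ( x_i^{2nε} Γ_i^{ε}(f) − q^{−n} f ) and D_{2n−1}(f) = Σ_{i,ε} φ_{i,ε} x_i^{−ε} · ( x_i^{2nε} Γ_i^{ε}(f) − q^{−n} f ). Then for every m ∈ ℤ the commutation relation D_m ∘ M_{ê₁} − M_{ê₁} ∘ D_m = (q − 1) D_{m+1} + (q^{−1} − 1) D_{m−1} holds. (This is the relation [D^{(𝔤)}_{1;n}, ê₁(x)] = (q−1) D^{(𝔤)}_{1;n+1} + (q^{−1}−1) D^{(𝔤)}_{1;n−1} for the even/odd translated first Macdonald operators at short labels, i.e. for 𝔤 = C_N^{(1)} and A_{2N}^{(2)}, valid for arbitrary coefficient functions φ.) -/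
import Mathlib


open scoped BigOperators

noncomputable section

/-- The rational function field `K(x_1, …, x_N)`, realized as the fraction field of the
polynomial ring in `N` variables over `K`. -/
abbrev RatFun (N : ℕ) (K : Type*) [Field K] : Type _ :=
  FractionRing (MvPolynomial (Fin N) K)

/-- The generator `x_i` of `K(x_1, …, x_N)`. -/
noncomputable def Xvar (N : ℕ) (K : Type*) [Field K] (i : Fin N) : RatFun N K :=
  algebraMap (MvPolynomial (Fin N) K) (RatFun N K) (MvPolynomial.X i)

/-- The translated first Macdonald-type operators at short labels, with arbitrary
coefficient functions `φ`:
`D_{2n} f  = q^{-n} f + ∑_{i,ε} φ_{i,ε} (x_i^{2nε} Γ_i^ε f - q^{-n} f)` and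
`D_{2n-1} f = ∑_{i,ε} φ_{i,ε} x_i^{-ε} (x_i^{2nε} Γ_i^ε f - q^{-n} f)`.
Here `Γ_i` is the `K`-algebra automorphism with `Γ_i x_j = q^{δ_{ij}} x_j`.
(For `m = 2n` we have `m / 2 = n` and `m * ε = 2nε`; for `m = 2n - 1` we have
`(m + 1) / 2 = n` and `(m + 1) * ε = 2nε`, all divisions being exact.) -/
noncomputable def Dshort {N : ℕ} {K : Type*} [Field K]
    (Γ : Fin N → (RatFun N K ≃ₐ[K] RatFun N K)) (φ : Fin N → ℤ → RatFun N K)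
    (q : K) (m : ℤ) (f : RatFun N K) : RatFun N K :=
  if m % 2 = 0 then
    algebraMap K (RatFun N K) q ^ (-(m / 2)) * f +
      ∑ i : Fin N, ∑ ε ∈ ({1, -1} : Finset ℤ),
        φ i ε * (Xvar N K i ^ (m * ε) * (Γ i ^ ε) f -
          algebraMap K (RatFun N K) q ^ (-(m / 2)) * f)
  else
    ∑ i : Fin N, ∑ ε ∈ ({1, -1} : Finset ℤ),
      φ i ε * Xvar N K i ^ (-ε) *
        (Xvar N K i ^ ((m + 1) * ε) * (Γ i ^ ε) f -
          algebraMap K (RatFun N K) q ^ (-((m + 1) / 2)) * f)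

lemma Xvar_ne_zero (N : ℕ) (K : Type*) [Field K] (i : Fin N) : Xvar N K i ≠ 0 := by
  have h : Function.Injective (algebraMap (MvPolynomial (Fin N) K) (RatFun N K)) :=
    IsFractionRing.injective _ _
  exact (map_ne_zero_iff _ h).mpr (MvPolynomial.X_ne_zero i)

lemma gamma_e {N : ℕ} {K : Type*} [Field K]
    (T : RatFun N K ≃ₐ[K] RatFun N K) (i : Fin N) (u : RatFun N K)
    (hT : ∀ j, T (Xvar N K j) = (if i = j then u else 1) * Xvar N K j) :
    T (∑ j : Fin N, (Xvar N K j + (Xvar N K j)⁻¹)) =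
      (∑ j : Fin N, (Xvar N K j + (Xvar N K j)⁻¹)) +
        ((u - 1) * Xvar N K i + (u⁻¹ - 1) * (Xvar N K i)⁻¹) := by
  rw [map_sum]
  have h : ∀ j : Fin N, T (Xvar N K j + (Xvar N K j)⁻¹) =
      (Xvar N K j + (Xvar N K j)⁻¹) +
        (if j = i then (u - 1) * Xvar N K i + (u⁻¹ - 1) * (Xvar N K i)⁻¹ else 0) := by
    intro j
    rw [map_add, map_inv₀, hT j]
    by_cases hji : j = i
    · subst hji
      rw [if_pos rfl, if_pos rfl, mul_inv]
      ring
    · rw [if_neg (Ne.symm hji), if_neg hji, one_mul]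
      ring
  rw [Finset.sum_congr rfl fun j _ => h j, Finset.sum_add_distrib,
    Finset.sum_ite_eq' Finset.univ i, if_pos (Finset.mem_univ i)]

set_option maxHeartbeats 1600000 in
/-- The commutation relation
`[D_m, ê₁(x)] = (q - 1) D_{m+1} + (q^{-1} - 1) D_{m-1}`
with `ê₁ = ∑ᵢ (xᵢ + xᵢ⁻¹)`, for the even/odd translated first Macdonald operators at
short labels, valid for arbitrary coefficient functions `φ`. -/
theorem commutation_first_Pieri_short
    (N : ℕ) (hN : 1 ≤ N) (K : Type*) [Field K] (q : K) (hq : q ≠ 0)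
    (Γ : Fin N → (RatFun N K ≃ₐ[K] RatFun N K))
    (hΓ : ∀ i j : Fin N,
      Γ i (Xvar N K j) =
        (if i = j then algebraMap K (RatFun N K) q else 1) * Xvar N K j)
    (φ : Fin N → ℤ → RatFun N K) (m : ℤ) (f : RatFun N K) :
    Dshort Γ φ q m ((∑ i : Fin N, (Xvar N K i + (Xvar N K i)⁻¹)) * f) -
        (∑ i : Fin N, (Xvar N K i + (Xvar N K i)⁻¹)) * Dshort Γ φ q m f =
      (algebraMap K (RatFun N K) q - 1) * Dshort Γ φ q (m + 1) f +
        ((algebraMap K (RatFun N K) q)⁻¹ - 1) * Dshort Γ φ q (m - 1) f := by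
  have hQ0 : (algebraMap K (RatFun N K)) q ≠ 0 :=
    (map_ne_zero_iff _ (RingHom.injective _)).mpr hq
  rcases Int.emod_two_eq m with hm | hm
  case' inl => -- m even
    have h1 : ¬ ((m + 1) % 2 = 0) := by omega
    have h2 : ¬ ((m - 1) % 2 = 0) := by omega
    rw [Dshort, Dshort, Dshort, Dshort, if_pos hm, if_pos hm, if_neg h1, if_neg h2]
  case' inr => -- m odd
    have h1 : (m + 1) % 2 = 0 := by omega
    have h2 : (m - 1) % 2 = 0 := by omega
    have h0 : ¬ (m % 2 = 0) := by omega
    rw [Dshort, Dshort, Dshort, Dshort, if_neg h0, if_neg h0, if_pos h1, if_pos h2]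
  all_goals
    set Q : RatFun N K := algebraMap K (RatFun N K) q with hQdef
    set e : RatFun N K := ∑ i : Fin N, (Xvar N K i + (Xvar N K i)⁻¹) with he
    clear_value Q e
    have hG1 : ∀ i : Fin N, Γ i e =
        e + ((Q - 1) * Xvar N K i + (Q⁻¹ - 1) * (Xvar N K i)⁻¹) := by
      intro i
      rw [he]
      exact gamma_e (Γ i) i Q (hΓ i)
    have hsymmX : ∀ i j : Fin N, (Γ i).symm (Xvar N K j) =
        (if i = j then Q⁻¹ else 1) * Xvar N K j := by
      intro i j
      have h2 : (Γ i) ((if i = j then Q⁻¹ else 1) * Xvar N K j) = Xvar N K j := by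
        have hfix : (Γ i) (if i = j then Q⁻¹ else 1) = (if i = j then Q⁻¹ else 1) := by
          by_cases hij : i = j
          · simp only [if_pos hij]
            rw [hQdef, ← map_inv₀]
            exact (Γ i).commutes _
          · simp only [if_neg hij]
            exact map_one _
        rw [map_mul, hfix, hΓ i j]
        by_cases hij : i = j
        · simp only [if_pos hij]
          rw [← mul_assoc, inv_mul_cancel₀ hQ0, one_mul]
        · simp only [if_neg hij, one_mul]
      have h3 := congrArg (Γ i).symm h2
      rw [AlgEquiv.symm_apply_apply] at h3
      exact h3.symm
    have hG2 : ∀ i : Fin N, (Γ i).symm e =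
        e + ((Q⁻¹ - 1) * Xvar N K i + (Q - 1) * (Xvar N K i)⁻¹) := by
      intro i
      rw [he]
      have h := gamma_e (Γ i).symm i Q⁻¹ (hsymmX i)
      rwa [inv_inv] at h
    have hzinv : ∀ i : Fin N, (Γ i ^ (-1 : ℤ)) = (Γ i).symm := by
      intro i
      rw [zpow_neg_one]
      rfl
  case inl =>
    have key : ∀ i : Fin N, ∀ ε ∈ ({1, -1} : Finset ℤ),
        φ i ε * (Xvar N K i ^ (m * ε) * (Γ i ^ ε) (e * f) - Q ^ (-(m / 2)) * (e * f)) -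
          e * (φ i ε * (Xvar N K i ^ (m * ε) * (Γ i ^ ε) f - Q ^ (-(m / 2)) * f)) =
        (Q - 1) * (φ i ε * Xvar N K i ^ (-ε) *
            (Xvar N K i ^ ((m + 1 + 1) * ε) * (Γ i ^ ε) f - Q ^ (-((m + 1 + 1) / 2)) * f)) +
          (Q⁻¹ - 1) * (φ i ε * Xvar N K i ^ (-ε) *
            (Xvar N K i ^ ((m - 1 + 1) * ε) * (Γ i ^ ε) f - Q ^ (-((m - 1 + 1) / 2)) * f)) := by
      intro i ε hε
      have hX : Xvar N K i ≠ 0 := Xvar_ne_zero N K i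
      have hXX : Xvar N K i * (Xvar N K i)⁻¹ = 1 := mul_inv_cancel₀ hX
      have hQQ : Q * Q⁻¹ = 1 := mul_inv_cancel₀ hQ0
      have hQm : Q ^ (m / 2) ≠ 0 := zpow_ne_zero _ hQ0
      rw [map_mul, show (-((m + 1 + 1) / 2) : ℤ) = -(m / 2) + -1 by omega,
        show (-((m - 1 + 1) / 2) : ℤ) = -(m / 2) by omega, zpow_add₀ hQ0, zpow_neg_one]
      have hε' : ε = 1 ∨ ε = -1 := by simpa using hε
      rcases hε' with rfl | rfl
      · simp only [mul_one]
        rw [show (m - 1 + 1 : ℤ) = m by ring, zpow_add_one₀ hX (m + 1), zpow_add_one₀ hX m,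
          zpow_one, hG1 i, zpow_neg_one]
        linear_combination (-(Q - 1) * φ i 1 * (Xvar N K i ^ m * Xvar N K i) * (Γ i) f) * hXX +
          (φ i 1 * (Xvar N K i)⁻¹ * Q ^ (-(m / 2)) * f) * hQQ
      · rw [show (m * (-1 : ℤ)) = -m by ring, show ((m + 1 + 1) * (-1 : ℤ)) = -(m + 1 + 1) by ring,
          show ((m - 1 + 1) * (-1 : ℤ)) = -m by ring, show (-(-1 : ℤ)) = 1 by norm_num,
          zpow_one, hzinv i, hG2 i]
        simp only [zpow_neg]
        rw [zpow_add_one₀ hX (m + 1), zpow_add_one₀ hX m]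
        simp only [mul_inv]
        linear_combination
          (-(Q - 1) * φ i (-1) * ((Xvar N K i ^ m)⁻¹ * (Xvar N K i)⁻¹) * (Γ i).symm f) * hXX +
          (φ i (-1) * Xvar N K i * (Q ^ (m / 2))⁻¹ * f) * hQQ
    have hsum : (∑ i : Fin N, ∑ ε ∈ ({1, -1} : Finset ℤ),
          (φ i ε * (Xvar N K i ^ (m * ε) * (Γ i ^ ε) (e * f) - Q ^ (-(m / 2)) * (e * f)) -
            e * (φ i ε * (Xvar N K i ^ (m * ε) * (Γ i ^ ε) f - Q ^ (-(m / 2)) * f)))) =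
        ∑ i : Fin N, ∑ ε ∈ ({1, -1} : Finset ℤ),
          ((Q - 1) * (φ i ε * Xvar N K i ^ (-ε) *
              (Xvar N K i ^ ((m + 1 + 1) * ε) * (Γ i ^ ε) f - Q ^ (-((m + 1 + 1) / 2)) * f)) +
            (Q⁻¹ - 1) * (φ i ε * Xvar N K i ^ (-ε) *
              (Xvar N K i ^ ((m - 1 + 1) * ε) * (Γ i ^ ε) f - Q ^ (-((m - 1 + 1) / 2)) * f))) :=
      Finset.sum_congr rfl fun i _ => Finset.sum_congr rfl fun ε hε => key i ε hε
    simp only [Finset.sum_sub_distrib, Finset.sum_add_distrib, ← Finset.mul_sum] at hsum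
    linear_combination hsum
  case inr =>
    have key : ∀ i : Fin N, ∀ ε ∈ ({1, -1} : Finset ℤ),
        φ i ε * Xvar N K i ^ (-ε) *
            (Xvar N K i ^ ((m + 1) * ε) * (Γ i ^ ε) (e * f) - Q ^ (-((m + 1) / 2)) * (e * f)) -
          e * (φ i ε * Xvar N K i ^ (-ε) *
            (Xvar N K i ^ ((m + 1) * ε) * (Γ i ^ ε) f - Q ^ (-((m + 1) / 2)) * f)) =
        (Q - 1) * (φ i ε *
            (Xvar N K i ^ ((m + 1) * ε) * (Γ i ^ ε) f - Q ^ (-((m + 1) / 2)) * f)) +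
          (Q⁻¹ - 1) * (φ i ε *
            (Xvar N K i ^ ((m - 1) * ε) * (Γ i ^ ε) f - Q ^ (-((m - 1) / 2)) * f)) := by
      intro i ε hε
      have hX : Xvar N K i ≠ 0 := Xvar_ne_zero N K i
      have hXX : Xvar N K i * (Xvar N K i)⁻¹ = 1 := mul_inv_cancel₀ hX
      have hQQ : Q * Q⁻¹ = 1 := mul_inv_cancel₀ hQ0
      have hQm : Q ^ ((m + 1) / 2) ≠ 0 := zpow_ne_zero _ hQ0
      rw [map_mul, show (-((m - 1) / 2) : ℤ) = -((m + 1) / 2) + 1 by omega,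
        zpow_add₀ hQ0 (-((m + 1) / 2)) 1, zpow_one]
      have hε' : ε = 1 ∨ ε = -1 := by simpa using hε
      rcases hε' with rfl | rfl
      · simp only [mul_one]
        rw [zpow_add_one₀ hX m, zpow_sub_one₀ hX m, zpow_one, hG1 i, zpow_neg_one]
        linear_combination (φ i 1 * Xvar N K i ^ m * (Γ i) f *
            ((Q - 1) * Xvar N K i + (Q⁻¹ - 1) * (Xvar N K i)⁻¹)) * hXX +
          (φ i 1 * Q ^ (-((m + 1) / 2)) * f) * hQQ
      · rw [show ((m + 1) * (-1 : ℤ)) = -(m + 1) by ring,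
          show ((m - 1) * (-1 : ℤ)) = -(m - 1) by ring, show (-(-1 : ℤ)) = 1 by norm_num,
          zpow_one, hzinv i, hG2 i]
        simp only [zpow_neg]
        rw [zpow_add_one₀ hX m, zpow_sub_one₀ hX m]
        simp only [mul_inv, inv_inv]
        linear_combination (φ i (-1) * (Xvar N K i ^ m)⁻¹ * (Γ i).symm f *
            ((Q⁻¹ - 1) * Xvar N K i + (Q - 1) * (Xvar N K i)⁻¹)) * hXX +
          (φ i (-1) * (Q ^ ((m + 1) / 2))⁻¹ * f) * hQQ
    have hsum : (∑ i : Fin N, ∑ ε ∈ ({1, -1} : Finset ℤ),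
          (φ i ε * Xvar N K i ^ (-ε) *
              (Xvar N K i ^ ((m + 1) * ε) * (Γ i ^ ε) (e * f) - Q ^ (-((m + 1) / 2)) * (e * f)) -
            e * (φ i ε * Xvar N K i ^ (-ε) *
              (Xvar N K i ^ ((m + 1) * ε) * (Γ i ^ ε) f - Q ^ (-((m + 1) / 2)) * f)))) =
        ∑ i : Fin N, ∑ ε ∈ ({1, -1} : Finset ℤ),
          ((Q - 1) * (φ i ε *
              (Xvar N K i ^ ((m + 1) * ε) * (Γ i ^ ε) f - Q ^ (-((m + 1) / 2)) * f)) +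
            (Q⁻¹ - 1) * (φ i ε *
              (Xvar N K i ^ ((m - 1) * ε) * (Γ i ^ ε) f - Q ^ (-((m - 1) / 2)) * f))) :=
      Finset.sum_congr rfl fun i _ => Finset.sum_congr rfl fun ε hε => key i ε hε
    simp only [Finset.sum_sub_distrib, Finset.sum_add_distrib, ← Finset.mul_sum] at hsum
    have hcc : Q ^ (-((m - 1) / 2)) = Q ^ (-((m + 1) / 2)) * Q := by
      rw [show (-((m - 1) / 2) : ℤ) = -((m + 1) / 2) + 1 by omega,
        zpow_add₀ hQ0 (-((m + 1) / 2)) 1, zpow_one]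
    have hQQ : Q⁻¹ * Q = 1 := inv_mul_cancel₀ hQ0
    linear_combination hsum - ((Q⁻¹ - 1) * f) * hcc - (Q ^ (-((m + 1) / 2)) * f) * hQQ
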